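/- arXiv:2004.01585 — 3 statements merged into one kernel-verified Lean document; each statement's English description precedes it below -/
import Mathlib

section
/- Let A ∈ ℝ^{m×m}, let B = ½(A + Aᵀ) be its symmetric part with eigendecomposition B = Z diag(λ_1,…,λ_m) Zᵀ where Z is orthogonal, and let 0 < ε ≤ ε̄ < ∞. Then the unique minimizer of X ↦ ‖A − X‖_F² over X ∈ SPD^spec_{[ε,ε̄]}(m) is Z Y Zᵀ, where Y = diag(d_1,…,d_m) with d_i = λ_i if λ_i ∈ [ε,ε̄], d_i = ε̄ if λ_i > ε̄, and d_i = ε if λ_i < ε. -/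
/-!
The skew part `A - B` of `A` is Frobenius-orthogonal to every symmetric matrix, so for symmetric
`X` we get `‖A - X‖² = ‖A - B‖² + ‖B - X‖²`, and conjugating by `Z` turns the second term into
`‖diag λ - W‖²` with `W = Zᵀ X Z`. Since `W` has the spectrum of `X`, its diagonal entries lie in
`[ε, ε̄]`; dropping the off-diagonal terms, `‖diag λ - W‖² ≥ Σ (λᵢ - Wᵢᵢ)² ≥ Σ (λᵢ - dᵢ)²`, because
`dᵢ` is the point of `[ε, ε̄]` nearest to `λᵢ`. Equality forces `W = diag d`.
-/

open Matrix BigOperators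

/-- The Frobenius norm of a real square matrix. -/
noncomputable def frobNorm {m : ℕ} (A : Matrix (Fin m) (Fin m) ℝ) : ℝ :=
  Real.sqrt (∑ i, ∑ j, (A i j) ^ 2)

/-- Symmetric positive definite matrices whose spectrum is contained in `[a, b]`. -/
def SPDspec {m : ℕ} (a b : ℝ) : Set (Matrix (Fin m) (Fin m) ℝ) :=
  {M | M.PosDef ∧ ∀ μ ∈ spectrum ℝ M, μ ∈ Set.Icc a b}

section Frobenius

variable {m : ℕ}

lemma frobNorm_sq (M : Matrix (Fin m) (Fin m) ℝ) : frobNorm M ^ 2 = ∑ i, ∑ j, M i j ^ 2 :=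
  Real.sq_sqrt (by positivity)

lemma frobNorm_sq_eq_trace (M : Matrix (Fin m) (Fin m) ℝ) : frobNorm M ^ 2 = (Mᵀ * M).trace := by
  rw [frobNorm_sq, trace, Finset.sum_comm]
  simp [mul_apply, sq]

lemma frobNorm_add_sq_of_transpose_eq_neg {P Q : Matrix (Fin m) (Fin m) ℝ}
    (hP : Pᵀ = -P) (hQ : Qᵀ = Q) : frobNorm (P + Q) ^ 2 = frobNorm P ^ 2 + frobNorm Q ^ 2 := by
  have hcross : (Pᵀ * Q).trace + (Qᵀ * P).trace = 0 := by
    rw [hP, hQ, trace_mul_comm Q, neg_mul, trace_neg, neg_add_cancel]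
  simp only [frobNorm_sq_eq_trace, transpose_add, add_mul, mul_add, trace_add]
  linarith

lemma frobNorm_sub_sq_eq_add_of_symmPart {A B X : Matrix (Fin m) (Fin m) ℝ}
    (hB : B = (1 / 2 : ℝ) • (A + Aᵀ)) (hX : Xᵀ = X) :
    frobNorm (A - X) ^ 2 = frobNorm (A - B) ^ 2 + frobNorm (B - X) ^ 2 := by
  have hB' : Bᵀ = B := by rw [hB, transpose_smul, transpose_add, transpose_transpose, add_comm]
  rw [← frobNorm_add_sq_of_transpose_eq_neg, sub_add_sub_cancel]
  · subst hB
    ext i j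
    simp only [Matrix.transpose_apply, Matrix.sub_apply, Matrix.smul_apply, Matrix.add_apply,
      Matrix.neg_apply, smul_eq_mul]
    ring
  · rw [transpose_sub, hB', hX]

lemma frobNorm_transpose_mul_mul_sq {Z : Matrix (Fin m) (Fin m) ℝ} (hZ : Z * Zᵀ = 1)
    (M : Matrix (Fin m) (Fin m) ℝ) : frobNorm (Zᵀ * M * Z) ^ 2 = frobNorm M ^ 2 := by
  simp only [frobNorm_sq_eq_trace, transpose_mul, transpose_transpose]
  rw [show Zᵀ * (Mᵀ * Z) * (Zᵀ * M * Z) = Zᵀ * (Mᵀ * (Z * Zᵀ) * M * Z) by noncomm_ring, hZ,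
    mul_one, trace_mul_comm, mul_assoc (Mᵀ * M), hZ, mul_one]

lemma frobNorm_sq_le_of_sq_le {M N : Matrix (Fin m) (Fin m) ℝ}
    (h : ∀ i j, M i j ^ 2 ≤ N i j ^ 2) : frobNorm M ^ 2 ≤ frobNorm N ^ 2 := by
  rw [frobNorm_sq, frobNorm_sq]
  exact Finset.sum_le_sum fun i _ ↦ Finset.sum_le_sum fun j _ ↦ h i j

lemma sq_eq_sq_of_frobNorm_sq_eq {M N : Matrix (Fin m) (Fin m) ℝ}
    (h : ∀ i j, M i j ^ 2 ≤ N i j ^ 2) (heq : frobNorm M ^ 2 = frobNorm N ^ 2) (i j : Fin m) :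
    M i j ^ 2 = N i j ^ 2 := by
  rw [frobNorm_sq, frobNorm_sq] at heq
  have hrow := (Finset.sum_eq_sum_iff_of_le fun i _ ↦ Finset.sum_le_sum fun j _ ↦ h i j).mp heq
  exact (Finset.sum_eq_sum_iff_of_le fun j _ ↦ h i j).mp (hrow i (Finset.mem_univ _)) j
    (Finset.mem_univ _)

end Frobenius

noncomputable def clip (a b x : ℝ) : ℝ := if x < a then a else if b < x then b else x

lemma clip_mem_Icc {a b : ℝ} (hab : a ≤ b) (x : ℝ) : clip a b x ∈ Set.Icc a b := by
  unfold clip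
  split_ifs <;> constructor <;> linarith

lemma sq_sub_clip_le {a b x t : ℝ} (ht : t ∈ Set.Icc a b) : (x - clip a b x) ^ 2 ≤ (x - t) ^ 2 := by
  obtain ⟨hat, htb⟩ := ht
  unfold clip
  split_ifs <;> nlinarith

lemma eq_clip_of_sq_sub_eq {a b x t : ℝ} (ht : t ∈ Set.Icc a b)
    (h : (x - t) ^ 2 = (x - clip a b x) ^ 2) : t = clip a b x := by
  obtain ⟨hat, htb⟩ := ht
  unfold clip at h ⊢
  split_ifs at h ⊢ <;> nlinarith

lemma Matrix.IsHermitian.diag_mem_Icc {n : Type*} [Fintype n] [DecidableEq n]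
    {W : Matrix n n ℝ} (hW : W.IsHermitian) {a b : ℝ} (h : spectrum ℝ W ⊆ Set.Icc a b) (i : n) :
    W i i ∈ Set.Icc a b := by
  have hlow : (W - algebraMap ℝ _ a).PosSemidef := by
    refine posSemidef_iff_isHermitian_and_spectrum_nonneg.mpr ⟨?_, ?_⟩
    · exact hW.sub (isHermitian_diagonal _)
    · rw [← spectrum.sub_singleton_eq]
      rintro _ ⟨μ, hμ, _, rfl, rfl⟩
      exact sub_nonneg.mpr (h hμ).1
  have hupp : (algebraMap ℝ _ b - W).PosSemidef := by
    refine posSemidef_iff_isHermitian_and_spectrum_nonneg.mpr ⟨?_, ?_⟩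
    · exact (isHermitian_diagonal _).sub hW
    · rw [← spectrum.singleton_sub_eq]
      rintro _ ⟨_, rfl, μ, hμ, rfl⟩
      exact sub_nonneg.mpr (h hμ).2
  have hai := hlow.diag_nonneg (i := i)
  have hib := hupp.diag_nonneg (i := i)
  simp only [algebraMap_eq_diagonal, sub_apply, diagonal_apply_eq, Pi.algebraMap_apply,
    Algebra.algebraMap_self, RingHom.id_apply, sub_nonneg] at hai hib
  exact ⟨hai, hib⟩

lemma mul_mul_mul_mul_eq_self_of_mul_eq_one {M : Type*} [Monoid M] {u v : M} (h : v * u = 1)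
    (x : M) : v * (u * x * v) * u = x := by
  rw [← mul_assoc, ← mul_assoc, h, one_mul, mul_assoc, h, mul_one]

section Orthogonal

variable {m : ℕ} {Z : Matrix (Fin m) (Fin m) ℝ}

lemma frobNorm_sub_sq_eq_of_eigendecomposition {A B X : Matrix (Fin m) (Fin m) ℝ}
    {lam : Fin m → ℝ} (hB : B = (1 / 2 : ℝ) • (A + Aᵀ)) (hZ : Z * Zᵀ = 1) (hZ' : Zᵀ * Z = 1)
    (hdec : B = Z * diagonal lam * Zᵀ) (hX : Xᵀ = X) :
    frobNorm (A - X) ^ 2 = frobNorm (A - B) ^ 2 + frobNorm (diagonal lam - Zᵀ * X * Z) ^ 2 := by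
  rw [frobNorm_sub_sq_eq_add_of_symmPart hB hX, ← frobNorm_transpose_mul_mul_sq hZ (B - X),
    mul_sub, sub_mul, hdec, mul_mul_mul_mul_eq_self_of_mul_eq_one hZ']

lemma spectrum_transpose_mul_mul (hZ : Z * Zᵀ = 1) (hZ' : Zᵀ * Z = 1)
    (X : Matrix (Fin m) (Fin m) ℝ) : spectrum ℝ (Zᵀ * X * Z) = spectrum ℝ X :=
  spectrum.units_conjugate' (u := ⟨Z, Zᵀ, hZ, hZ'⟩)

lemma transpose_mul_mul_diag_mem_Icc (hZ : Z * Zᵀ = 1) (hZ' : Zᵀ * Z = 1) {a b : ℝ}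
    {X : Matrix (Fin m) (Fin m) ℝ} (hX : X ∈ SPDspec a b) (i : Fin m) :
    (Zᵀ * X * Z) i i ∈ Set.Icc a b := by
  refine IsHermitian.diag_mem_Icc ?_ ?_ i
  · simpa using isHermitian_conjTranspose_mul_mul Z hX.1.isHermitian
  · rw [spectrum_transpose_mul_mul hZ hZ']
    exact hX.2

lemma spectrum_mul_diagonal_mul_transpose (hZ : Z * Zᵀ = 1) (hZ' : Zᵀ * Z = 1) (d : Fin m → ℝ) :
    spectrum ℝ (Z * diagonal d * Zᵀ) = Set.range d := by
  rw [← spectrum_diagonal d]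
  exact spectrum.units_conjugate (u := ⟨Z, Zᵀ, hZ, hZ'⟩)

lemma mul_diagonal_mul_transpose_mem_SPDspec (hZ : Z * Zᵀ = 1) (hZ' : Zᵀ * Z = 1)
    {a b : ℝ} (ha : 0 < a) {d : Fin m → ℝ} (hd : ∀ i, d i ∈ Set.Icc a b) :
    Z * diagonal d * Zᵀ ∈ SPDspec a b := by
  refine ⟨?_, ?_⟩
  · have hdiag : (diagonal d).PosDef := posDef_diagonal_iff.mpr fun i ↦ ha.trans_le (hd i).1
    have hinj : Function.Injective Z.vecMul := fun x y hxy ↦ by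
      simpa [vecMul_vecMul, hZ] using congrArg (vecMul · Zᵀ) hxy
    simpa using hdiag.mul_mul_conjTranspose_same hinj
  · rw [spectrum_mul_diagonal_mul_transpose hZ hZ']
    rintro _ ⟨i, rfl⟩
    exact hd i

end Orthogonal

section Clipping

variable {m : ℕ} {a b : ℝ} {lam : Fin m → ℝ} {W : Matrix (Fin m) (Fin m) ℝ}

lemma sq_diagonal_sub_clip_apply_le (hW : ∀ i, W i i ∈ Set.Icc a b) (i j : Fin m) :
    (diagonal lam - diagonal (fun k ↦ clip a b (lam k))) i j ^ 2 ≤ (diagonal lam - W) i j ^ 2 := by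
  by_cases hij : i = j
  · subst hij
    simpa using sq_sub_clip_le (hW i)
  · simp [hij, sq_nonneg]

lemma eq_diagonal_clip_of_frobNorm_sq_eq (hW : ∀ i, W i i ∈ Set.Icc a b)
    (heq : frobNorm (diagonal lam - diagonal (fun k ↦ clip a b (lam k))) ^ 2 =
      frobNorm (diagonal lam - W) ^ 2) :
    W = diagonal (fun k ↦ clip a b (lam k)) := by
  ext i j
  have hij := sq_eq_sq_of_frobNorm_sq_eq (sq_diagonal_sub_clip_apply_le hW) heq i j
  by_cases hij' : i = j
  · subst hij'
    simpa using eq_clip_of_sq_sub_eq (hW i) (by simpa using hij.symm)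
  · simpa [hij'] using hij.symm

end Clipping

/-- Eigenvalue clipping gives the unique nearest matrix (in Frobenius norm) in
`SPD^spec_{[ε,ε̄]}` to an arbitrary matrix `A`. -/
theorem clipped_matrix_is_unique_minimizer {m : ℕ} (A B Z : Matrix (Fin m) (Fin m) ℝ)
    (lam : Fin m → ℝ) (ε εbar : ℝ) (hε : 0 < ε) (hεε : ε ≤ εbar)
    (hB : B = (1 / 2 : ℝ) • (A + Aᵀ))
    (hZ : Z * Zᵀ = 1) (hZ' : Zᵀ * Z = 1)
    (hdec : B = Z * Matrix.diagonal lam * Zᵀ)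
    (d : Fin m → ℝ)
    (hd : ∀ i, d i = if lam i < ε then ε else if εbar < lam i then εbar else lam i) :
    Z * Matrix.diagonal d * Zᵀ ∈ SPDspec ε εbar ∧
      (∀ X ∈ SPDspec ε εbar,
        frobNorm (A - Z * Matrix.diagonal d * Zᵀ) ^ 2 ≤ frobNorm (A - X) ^ 2) ∧
      (∀ X ∈ SPDspec ε εbar,
        frobNorm (A - X) ^ 2 = frobNorm (A - Z * Matrix.diagonal d * Zᵀ) ^ 2 →
          X = Z * Matrix.diagonal d * Zᵀ) := by
  obtain rfl : d = fun i ↦ clip ε εbar (lam i) := funext hd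
  have hmem := mul_diagonal_mul_transpose_mem_SPDspec hZ hZ' hε fun i ↦ clip_mem_Icc hεε (lam i)
  have hdist (X) (hX : X ∈ SPDspec ε εbar) := frobNorm_sub_sq_eq_of_eigendecomposition hB hZ hZ'
    hdec (isHermitian_iff_isSymm.mp hX.1.isHermitian).eq
  refine ⟨hmem, fun X hX ↦ ?_, fun X hX heq ↦ ?_⟩
  · rw [hdist _ hmem, hdist X hX, mul_mul_mul_mul_eq_self_of_mul_eq_one hZ']
    exact add_le_add_right (frobNorm_sq_le_of_sq_le
      (sq_diagonal_sub_clip_apply_le (transpose_mul_mul_diag_mem_Icc hZ hZ' hX))) _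
  · rw [hdist _ hmem, hdist X hX, mul_mul_mul_mul_eq_self_of_mul_eq_one hZ', add_right_inj] at heq
    rw [← eq_diagonal_clip_of_frobNorm_sq_eq (transpose_mul_mul_diag_mem_Icc hZ hZ' hX) heq.symm,
      mul_mul_mul_mul_eq_self_of_mul_eq_one hZ]
end

section
/- Let ε > 0 and let P₁ : SYM(m) → SPD^spec_{[ε,∞)}(m) be the eigenvalue-clipping projection: for M = V diag(λ_1,…,λ_m) Vᵀ symmetric, P₁(M) = V diag(max(λ_1,ε),…,max(λ_m,ε)) Vᵀ. Then P₁ is 1-Lipschitz with respect to the Frobenius norm: for all A, B ∈ SYM(m), ‖P₁(A) − P₁(B)‖_F ≤ ‖A − B‖_F. -/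
open Matrix BigOperators


/-- The eigenvalue-clipping projection `P₁` of symmetric matrices onto
`SPD^spec_{[ε,∞)}`, defined via the spectral decomposition by
`P₁(V diag(λ_i) Vᵀ) = V diag(max(λ_i, ε)) Vᵀ`. -/
noncomputable def clipProj {m : ℕ} (ε : ℝ) (A : Matrix (Fin m) (Fin m) ℝ) :
    Matrix (Fin m) (Fin m) ℝ :=
  if h : A.IsHermitian then
    (h.eigenvectorUnitary : Matrix (Fin m) (Fin m) ℝ) *
      Matrix.diagonal (fun i => max (h.eigenvalues i) ε) *
      (star (h.eigenvectorUnitary : Matrix (Fin m) (Fin m) ℝ))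
  else A

lemma sumsq_eq_trace {m : ℕ} (M : Matrix (Fin m) (Fin m) ℝ) :
    ∑ i, ∑ j, (M i j) ^ 2 = (Mᵀ * M).trace := by
  simp only [Matrix.trace, Matrix.diag, Matrix.mul_apply, Matrix.transpose_apply, sq]
  exact Finset.sum_comm

lemma frob_sq_conj {m : ℕ} (U V M : Matrix (Fin m) (Fin m) ℝ)
    (hU : U * Uᵀ = 1) (hV : V * Vᵀ = 1) :
    ∑ i, ∑ j, ((Uᵀ * M * V) i j) ^ 2 = ∑ i, ∑ j, (M i j) ^ 2 := by
  rw [sumsq_eq_trace, sumsq_eq_trace]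
  have h1 : (Uᵀ * M * V)ᵀ = Vᵀ * Mᵀ * U := by
    simp [Matrix.transpose_mul, Matrix.mul_assoc]
  rw [h1]
  have h2 : Vᵀ * Mᵀ * U * (Uᵀ * M * V) = Vᵀ * (Mᵀ * M) * V := by
    rw [Matrix.mul_assoc (Vᵀ * Mᵀ) U, ← Matrix.mul_assoc U (Uᵀ * M) V,
      ← Matrix.mul_assoc U Uᵀ M, hU, Matrix.one_mul, ← Matrix.mul_assoc,
      Matrix.mul_assoc Vᵀ Mᵀ M]
  rw [h2, Matrix.trace_mul_cycle, ← Matrix.mul_assoc, hV, Matrix.one_mul]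

lemma clip_sq_le (a b ε : ℝ) : (max a ε - max b ε) ^ 2 ≤ (a - b) ^ 2 := by
  rw [← sq_abs, ← sq_abs (a - b)]
  exact pow_le_pow_left₀ (abs_nonneg _) (abs_max_sub_max_le_abs a b ε) 2

/-- Conjugation identity. -/
lemma conj_diag_sub {m : ℕ} (U V : Matrix (Fin m) (Fin m) ℝ)
    (hU1 : Uᵀ * U = 1) (hV1 : Vᵀ * V = 1) (dA dB : Fin m → ℝ) :
    Uᵀ * (U * Matrix.diagonal dA * Uᵀ - V * Matrix.diagonal dB * Vᵀ) * V =
      Matrix.diagonal dA * (Uᵀ * V) - (Uᵀ * V) * Matrix.diagonal dB := by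
  rw [Matrix.mul_sub, Matrix.sub_mul]
  congr 1
  · simp only [← Matrix.mul_assoc]
    rw [hU1, Matrix.one_mul, Matrix.mul_assoc]
  · simp only [← Matrix.mul_assoc]
    rw [Matrix.mul_assoc (Uᵀ * V * Matrix.diagonal dB) Vᵀ V, hV1, Matrix.mul_one,
      Matrix.mul_assoc]

/-- The eigenvalue-clipping projection `P₁` is 1-Lipschitz for the Frobenius norm on
symmetric matrices. -/
theorem clipProj_lipschitz {m : ℕ} (ε : ℝ) (hε : 0 < ε)
    (A B : Matrix (Fin m) (Fin m) ℝ) (hA : Aᵀ = A) (hB : Bᵀ = B) :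
    frobNorm (clipProj ε A - clipProj ε B) ≤ frobNorm (A - B) := by
  have hA' : A.IsHermitian := by
    rwa [Matrix.IsHermitian, Matrix.conjTranspose_eq_transpose_of_trivial]
  have hB' : B.IsHermitian := by
    rwa [Matrix.IsHermitian, Matrix.conjTranspose_eq_transpose_of_trivial]
  set U : Matrix (Fin m) (Fin m) ℝ := (hA'.eigenvectorUnitary : Matrix (Fin m) (Fin m) ℝ)
    with hUdef
  set V : Matrix (Fin m) (Fin m) ℝ := (hB'.eigenvectorUnitary : Matrix (Fin m) (Fin m) ℝ)
    with hVdef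
  have hU1 : Uᵀ * U = 1 := by
    have := Unitary.coe_star_mul_self hA'.eigenvectorUnitary
    simpa [hUdef, Matrix.star_eq_conjTranspose,
      Matrix.conjTranspose_eq_transpose_of_trivial] using this
  have hU2 : U * Uᵀ = 1 := by
    have := Unitary.coe_mul_star_self hA'.eigenvectorUnitary
    simpa [hUdef, Matrix.star_eq_conjTranspose,
      Matrix.conjTranspose_eq_transpose_of_trivial] using this
  have hV1 : Vᵀ * V = 1 := by
    have := Unitary.coe_star_mul_self hB'.eigenvectorUnitary
    simpa [hVdef, Matrix.star_eq_conjTranspose,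
      Matrix.conjTranspose_eq_transpose_of_trivial] using this
  have hV2 : V * Vᵀ = 1 := by
    have := Unitary.coe_mul_star_self hB'.eigenvectorUnitary
    simpa [hVdef, Matrix.star_eq_conjTranspose,
      Matrix.conjTranspose_eq_transpose_of_trivial] using this
  have hAspec : A = U * Matrix.diagonal hA'.eigenvalues * Uᵀ := by
    have := hA'.spectral_theorem
    simpa [hUdef, Matrix.star_eq_conjTranspose, Matrix.conjTranspose_eq_transpose_of_trivial,
      RCLike.ofReal_real_eq_id, Function.comp] using this
  have hBspec : B = V * Matrix.diagonal hB'.eigenvalues * Vᵀ := by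
    have := hB'.spectral_theorem
    simpa [hVdef, Matrix.star_eq_conjTranspose, Matrix.conjTranspose_eq_transpose_of_trivial,
      RCLike.ofReal_real_eq_id, Function.comp] using this
  have hcA : clipProj ε A = U * Matrix.diagonal (fun i => max (hA'.eigenvalues i) ε) * Uᵀ := by
    rw [clipProj, dif_pos hA']
    rw [Matrix.star_eq_conjTranspose, Matrix.conjTranspose_eq_transpose_of_trivial]
  have hcB : clipProj ε B = V * Matrix.diagonal (fun i => max (hB'.eigenvalues i) ε) * Vᵀ := by
    rw [clipProj, dif_pos hB']
    rw [Matrix.star_eq_conjTranspose, Matrix.conjTranspose_eq_transpose_of_trivial]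
  set W : Matrix (Fin m) (Fin m) ℝ := Uᵀ * V with hWdef
  -- rewrite the two Frobenius norms via conjugation invariance
  have e1 : frobNorm (clipProj ε A - clipProj ε B) =
      Real.sqrt (∑ i, ∑ j,
        ((Matrix.diagonal (fun i => max (hA'.eigenvalues i) ε) * W -
          W * Matrix.diagonal (fun i => max (hB'.eigenvalues i) ε)) i j) ^ 2) := by
    rw [frobNorm, ← frob_sq_conj U V _ hU2 hV2, hcA, hcB,
      conj_diag_sub U V hU1 hV1]
  have e2 : frobNorm (A - B) =
      Real.sqrt (∑ i, ∑ j,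
        ((Matrix.diagonal hA'.eigenvalues * W -
          W * Matrix.diagonal hB'.eigenvalues) i j) ^ 2) := by
    rw [frobNorm, ← frob_sq_conj U V _ hU2 hV2]
    conv_lhs => rw [hAspec, hBspec]
    rw [conj_diag_sub U V hU1 hV1]
  rw [e1, e2]
  apply Real.sqrt_le_sqrt
  apply Finset.sum_le_sum
  intro i _
  apply Finset.sum_le_sum
  intro j _
  simp only [Matrix.sub_apply, Matrix.diagonal_mul, Matrix.mul_diagonal]
  have h1 : max (hA'.eigenvalues i) ε * W i j - W i j * max (hB'.eigenvalues j) ε =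
      (max (hA'.eigenvalues i) ε - max (hB'.eigenvalues j) ε) * W i j := by ring
  have h2 : hA'.eigenvalues i * W i j - W i j * hB'.eigenvalues j =
      (hA'.eigenvalues i - hB'.eigenvalues j) * W i j := by ring
  rw [h1, h2, mul_pow, mul_pow]
  exact mul_le_mul_of_nonneg_right (clip_sq_le _ _ _) (sq_nonneg _)
end

section
/- Let Ω ⊂ ℝⁿ be a bounded open set, p ∈ (1,∞), s ∈ (0,1), ε > 0, and let P₁ be the eigenvalue-clipping projection P₁(V diag(λ_i) Vᵀ) = V diag(max(λ_i,ε)) Vᵀ of SYM(m) onto SPD^spec_{[ε,∞)}(m). If w ∈ W^{s,p}(Ω; SYM(m)), then v := P₁∘w ∈ W^{s,p}(Ω; SPD^spec_{[ε,∞)}(m)); moreover the Gagliardo seminorm does not increase, |v|_{W^{s,p}} ≤ |w|_{W^{s,p}}, and ‖v‖_{L^p}^p ≤ 2^{p−1}(m ε²)^{p/2}·|Ω| + 2^{p−1}‖w‖_{L^p}^p. -/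
open Matrix BigOperators

open MeasureTheory
open scoped ENNReal

noncomputable instance matrixMeasurableSpace {m : ℕ} :
    MeasurableSpace (Matrix (Fin m) (Fin m) ℝ) := borel _

instance matrixBorelSpace {m : ℕ} : BorelSpace (Matrix (Fin m) (Fin m) ℝ) := ⟨rfl⟩

/-- The `p`-th power of the `L^p(Ω)`-norm (Frobenius norm pointwise), as an
extended nonnegative real. -/
noncomputable def lpPow {n m : ℕ} (Ω : Set (EuclideanSpace ℝ (Fin n))) (p : ℝ)
    (w : EuclideanSpace ℝ (Fin n) → Matrix (Fin m) (Fin m) ℝ) : ℝ≥0∞ :=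
  ∫⁻ x in Ω, ENNReal.ofReal (frobNorm (w x) ^ p)

/-- The `p`-th power of the Gagliardo `W^{s,p}(Ω)`-seminorm (Frobenius norm
pointwise), as an extended nonnegative real. -/
noncomputable def gagliardoPow {n m : ℕ} (Ω : Set (EuclideanSpace ℝ (Fin n))) (p s : ℝ)
    (w : EuclideanSpace ℝ (Fin n) → Matrix (Fin m) (Fin m) ℝ) : ℝ≥0∞ :=
  ∫⁻ x in Ω, ∫⁻ y in Ω,
    ENNReal.ofReal (frobNorm (w x - w y) ^ p / ‖x - y‖ ^ ((n : ℝ) + p * s))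

/-- Membership in the Lebesgue set `L^p(Ω; K)` of matrix-valued functions with
values a.e. in `K`. -/
def MemLpSet {n m : ℕ} (Ω : Set (EuclideanSpace ℝ (Fin n))) (p : ℝ)
    (K : Set (Matrix (Fin m) (Fin m) ℝ))
    (w : EuclideanSpace ℝ (Fin n) → Matrix (Fin m) (Fin m) ℝ) : Prop :=
  AEMeasurable w (volume.restrict Ω) ∧ (∀ᵐ x ∂(volume.restrict Ω), w x ∈ K) ∧
    lpPow Ω p w < ⊤

/-- Membership in the fractional Sobolev set `W^{s,p}(Ω; K)` of matrix-valued
functions with values a.e. in `K`. -/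
def MemWsp {n m : ℕ} (Ω : Set (EuclideanSpace ℝ (Fin n))) (p s : ℝ)
    (K : Set (Matrix (Fin m) (Fin m) ℝ))
    (w : EuclideanSpace ℝ (Fin n) → Matrix (Fin m) (Fin m) ℝ) : Prop :=
  MemLpSet Ω p K w ∧ gagliardoPow Ω p s w < ⊤

/-!
Write symmetric `A = U diag(a) Uᵀ` and `B = V diag(b) Vᵀ` with `U, V` orthogonal and put
`W = UᵀV`. By orthogonal invariance of the Frobenius norm,
`‖f(A) − f(B)‖² = ∑ᵢⱼ (f aᵢ − f bⱼ)² Wᵢⱼ²`, so every `K`-Lipschitz `f : ℝ → ℝ` acts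
`K`-Lipschitz on symmetric matrices. For the clipping `f = max · ε` this makes `P₁` a
contraction of `SYM(m)`, which bounds the Gagliardo integrand pointwise, gives measurability
of `P₁ ∘ w`, and, together with `P₁ 0 = ε I`, gives `‖P₁ A‖ ≤ √m ε + ‖A‖`; the `L^p` bound then
follows from `(a + b)^p ≤ 2^(p-1) (a^p + b^p)`. The spectrum of `P₁ A` is
`max · ε` applied to that of `A`.
-/

open scoped Matrix.Norms.Frobenius

namespace Matrix

variable {l n : Type*} [Fintype l] [Fintype n]

theorem frobenius_norm_sq_eq_sum (A : Matrix l n ℝ) : ‖A‖ ^ 2 = ∑ i, ∑ j, A i j ^ 2 := by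
  rw [frobenius_norm_def, ← Real.sqrt_eq_rpow, Real.sq_sqrt (by positivity)]
  simp

theorem frobenius_norm_sq_eq_trace (A : Matrix l n ℝ) : ‖A‖ ^ 2 = trace (Aᵀ * A) := by
  rw [frobenius_norm_sq_eq_sum, Finset.sum_comm]
  simp only [trace, diag, mul_apply, transpose_apply, sq]

theorem frobenius_norm_unitary_mul [DecidableEq l] {U : Matrix l l ℝ}
    (hU : U ∈ unitaryGroup l ℝ) (A : Matrix l n ℝ) : ‖U * A‖ = ‖A‖ := by
  have hUU : Uᵀ * U = 1 := by
    simpa [star_eq_conjTranspose] using mem_unitaryGroup_iff'.mp hU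
  rw [← sq_eq_sq₀ (norm_nonneg _) (norm_nonneg _), frobenius_norm_sq_eq_trace,
    frobenius_norm_sq_eq_trace, transpose_mul, Matrix.mul_assoc, ← Matrix.mul_assoc Uᵀ, hUU,
    Matrix.one_mul]

theorem frobenius_norm_mul_unitary [DecidableEq n] (A : Matrix l n ℝ) {U : Matrix n n ℝ}
    (hU : U ∈ unitaryGroup n ℝ) : ‖A * U‖ = ‖A‖ := by
  rw [← frobenius_norm_conjTranspose, conjTranspose_mul, ← star_eq_conjTranspose,
    frobenius_norm_unitary_mul (Unitary.star_mem hU), frobenius_norm_conjTranspose]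

variable [DecidableEq n]

theorem frobenius_norm_sq_conj_diagonal_sub_conj_diagonal {U V : Matrix n n ℝ}
    (hU : U ∈ unitaryGroup n ℝ) (hV : V ∈ unitaryGroup n ℝ) (a b : n → ℝ) :
    ‖U * diagonal a * star U - V * diagonal b * star V‖ ^ 2 =
      ∑ i, ∑ j, (a i - b j) ^ 2 * (star U * V) i j ^ 2 := by
  have hconj : U * diagonal a * star U - V * diagonal b * star V =
      U * (diagonal a * (star U * V) - (star U * V) * diagonal b) * star V := by
    simp only [Matrix.mul_sub, Matrix.sub_mul, ← Matrix.mul_assoc, mem_unitaryGroup_iff.mp hU,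
      Matrix.one_mul]
    simp only [Matrix.mul_assoc, mem_unitaryGroup_iff.mp hV, Matrix.mul_one]
  rw [hconj, frobenius_norm_mul_unitary _ (Unitary.star_mem hV), frobenius_norm_unitary_mul hU,
    frobenius_norm_sq_eq_sum]
  refine Finset.sum_congr rfl fun i _ => Finset.sum_congr rfl fun j _ => ?_
  simp only [sub_apply, diagonal_mul, mul_diagonal]
  ring

theorem IsHermitian.cfc_eq_conj_diagonal {A : Matrix n n ℝ} (hA : A.IsHermitian) (f : ℝ → ℝ) :
    cfc f A = (hA.eigenvectorUnitary : Matrix n n ℝ) * diagonal (f ∘ hA.eigenvalues) *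
      star (hA.eigenvectorUnitary : Matrix n n ℝ) := by
  rw [hA.cfc_eq, IsHermitian.cfc, Unitary.conjStarAlgAut_apply]
  rfl

theorem IsHermitian.frobenius_norm_cfc_sub_cfc_le {A B : Matrix n n ℝ} (hA : A.IsHermitian)
    (hB : B.IsHermitian) {K : NNReal} {f : ℝ → ℝ} (hf : LipschitzWith K f) :
    ‖cfc f A - cfc f B‖ ≤ K * ‖A - B‖ := by
  have hU := hA.eigenvectorUnitary.2
  have hV := hB.eigenvectorUnitary.2
  refine le_of_pow_le_pow_left₀ two_ne_zero (by positivity) ?_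
  conv_rhs => rw [← cfc_id ℝ A, ← cfc_id ℝ B]
  rw [mul_pow, hA.cfc_eq_conj_diagonal, hB.cfc_eq_conj_diagonal, hA.cfc_eq_conj_diagonal,
    hB.cfc_eq_conj_diagonal, frobenius_norm_sq_conj_diagonal_sub_conj_diagonal hU hV,
    frobenius_norm_sq_conj_diagonal_sub_conj_diagonal hU hV, Finset.mul_sum]
  refine Finset.sum_le_sum fun i _ => ?_
  rw [Finset.mul_sum]
  refine Finset.sum_le_sum fun j _ => ?_
  rw [← mul_assoc]
  refine mul_le_mul_of_nonneg_right ?_ (sq_nonneg _)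
  have hfij :=
    pow_le_pow_left₀ dist_nonneg (hf.dist_le_mul (hA.eigenvalues i) (hB.eigenvalues j)) 2
  simpa only [Function.comp_apply, id, ← mul_pow, Real.dist_eq, mul_pow, sq_abs] using hfij

end Matrix

theorem Real.rpow_add_le_mul_rpow_add_rpow {a b p : ℝ} (ha : 0 ≤ a) (hb : 0 ≤ b) (hp : 1 ≤ p) :
    (a + b) ^ p ≤ 2 ^ (p - 1) * (a ^ p + b ^ p) := by
  lift a to NNReal using ha
  lift b to NNReal using hb
  exact_mod_cast NNReal.rpow_add_le_mul_rpow_add_rpow a b hp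

section clipProj

variable {m : ℕ} {ε : ℝ}

theorem frobNorm_eq_norm (A : Matrix (Fin m) (Fin m) ℝ) : frobNorm A = ‖A‖ := by
  rw [frobNorm, frobenius_norm_def, Real.sqrt_eq_rpow]
  simp

theorem clipProj_eq_cfc {A : Matrix (Fin m) (Fin m) ℝ} (hA : A.IsHermitian) :
    clipProj ε A = cfc (fun x => max x ε) A := by
  rw [clipProj, dif_pos hA, hA.cfc_eq_conj_diagonal]
  rfl

theorem lipschitzOnWith_clipProj :
    LipschitzOnWith 1 (clipProj ε) {A : Matrix (Fin m) (Fin m) ℝ | A.IsHermitian} := by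
  refine LipschitzOnWith.of_dist_le_mul fun A hA B hB => ?_
  rw [dist_eq_norm, dist_eq_norm, clipProj_eq_cfc hA, clipProj_eq_cfc hB]
  exact hA.frobenius_norm_cfc_sub_cfc_le hB (LipschitzWith.id.max_const ε)

theorem continuousOn_clipProj :
    ContinuousOn (clipProj ε) {A : Matrix (Fin m) (Fin m) ℝ | A.IsHermitian} :=
  lipschitzOnWith_clipProj.continuousOn

theorem le_of_mem_spectrum_clipProj {A : Matrix (Fin m) (Fin m) ℝ} (hA : A.IsHermitian)
    {μ : ℝ} (hμ : μ ∈ spectrum ℝ (clipProj ε A)) : ε ≤ μ := by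
  rw [clipProj_eq_cfc hA, cfc_map_spectrum _ _ hA.isSelfAdjoint] at hμ
  obtain ⟨x, -, rfl⟩ := hμ
  exact le_max_right x ε

theorem posDef_clipProj {A : Matrix (Fin m) (Fin m) ℝ} (hA : A.IsHermitian) (hε : 0 < ε) :
    (clipProj ε A).PosDef := by
  have hC : (clipProj ε A).IsHermitian := by
    rw [clipProj_eq_cfc hA]
    exact cfc_predicate _ A
  exact hC.posDef_iff_eigenvalues_pos.mpr fun i =>
    hε.trans_le (le_of_mem_spectrum_clipProj hA (hC.eigenvalues_mem_spectrum_real i))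

theorem norm_clipProj_le {A : Matrix (Fin m) (Fin m) ℝ} (hA : A.IsHermitian) (hε : 0 ≤ ε) :
    ‖clipProj ε A‖ ≤ √(m * ε ^ 2) + ‖A‖ := by
  have hzero : clipProj ε (0 : Matrix (Fin m) (Fin m) ℝ) = ε • 1 := by
    rw [clipProj_eq_cfc isHermitian_zero, cfc_apply_zero, max_eq_right hε,
      Algebra.algebraMap_eq_smul_one]
  have hone : ‖(1 : Matrix (Fin m) (Fin m) ℝ)‖ = √m := by
    simpa using congrArg NNReal.toReal (frobenius_nnnorm_one (n := Fin m) (α := ℝ))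
  have hnorm : ‖(ε • 1 : Matrix (Fin m) (Fin m) ℝ)‖ = √(m * ε ^ 2) := by
    rw [norm_smul, hone, Real.sqrt_mul' _ (sq_nonneg ε), Real.sqrt_sq hε, Real.norm_of_nonneg hε,
      mul_comm]
  have hlip : ‖clipProj ε A - clipProj ε 0‖ ≤ ‖A‖ := by
    simpa only [dist_eq_norm, sub_zero, NNReal.coe_one, one_mul] using
      lipschitzOnWith_clipProj.dist_le_mul A hA 0 isHermitian_zero
  calc ‖clipProj ε A‖ ≤ ‖clipProj ε 0‖ + ‖clipProj ε A - clipProj ε 0‖ :=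
        norm_le_norm_add_norm_sub' _ _
    _ ≤ √(m * ε ^ 2) + ‖A‖ := by rw [← hnorm, ← hzero]; exact add_le_add_right hlip _

theorem rpow_norm_clipProj_le {A : Matrix (Fin m) (Fin m) ℝ} (hA : A.IsHermitian)
    (hε : 0 ≤ ε) {p : ℝ} (hp : 1 ≤ p) :
    ‖clipProj ε A‖ ^ p ≤ 2 ^ (p - 1) * (m * ε ^ 2) ^ (p / 2) + 2 ^ (p - 1) * ‖A‖ ^ p := by
  have hsqrt : √(m * ε ^ 2) ^ p = (m * ε ^ 2) ^ (p / 2) := by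
    rw [Real.sqrt_eq_rpow, ← Real.rpow_mul (by positivity), one_div_mul_eq_div]
  calc ‖clipProj ε A‖ ^ p ≤ (√(m * ε ^ 2) + ‖A‖) ^ p :=
        Real.rpow_le_rpow (norm_nonneg _) (norm_clipProj_le hA hε) (by linarith)
    _ ≤ 2 ^ (p - 1) * (√(m * ε ^ 2) ^ p + ‖A‖ ^ p) :=
        Real.rpow_add_le_mul_rpow_add_rpow (Real.sqrt_nonneg _) (norm_nonneg _) hp
    _ = _ := by rw [hsqrt, mul_add]

end clipProj

theorem ContinuousOn.comp_aemeasurable_of_ae_mem {α β γ : Type*} [MeasurableSpace α]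
    [TopologicalSpace β] [MeasurableSpace β] [OpensMeasurableSpace β] [TopologicalSpace γ]
    [MeasurableSpace γ] [BorelSpace γ] {μ : Measure α} {f : β → γ} {g : α → β} {s : Set β}
    (hf : ContinuousOn f s) (hs : MeasurableSet s) (hg : AEMeasurable g μ)
    (hgs : ∀ᵐ x ∂μ, g x ∈ s) : AEMeasurable (f ∘ g) μ := by
  have hmap : (μ.map g).restrict s = μ.map g :=
    Measure.restrict_eq_self_of_ae_mem ((ae_map_iff hg hs).mpr hgs)
  exact (hmap ▸ hf.aemeasurable hs : AEMeasurable f (μ.map g)).comp_aemeasurable hg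

section FractionalSobolev

variable {n m : ℕ} {Ω : Set (EuclideanSpace ℝ (Fin n))} {p s : ℝ}

theorem gagliardoPow_comp_le {K : Set (Matrix (Fin m) (Fin m) ℝ)}
    {F : Matrix (Fin m) (Fin m) ℝ → Matrix (Fin m) (Fin m) ℝ} (hF : LipschitzOnWith 1 F K)
    (hp : 0 ≤ p) {w : EuclideanSpace ℝ (Fin n) → Matrix (Fin m) (Fin m) ℝ}
    (hwK : ∀ᵐ x ∂volume.restrict Ω, w x ∈ K) :
    gagliardoPow Ω p s (fun x => F (w x)) ≤ gagliardoPow Ω p s w := by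
  refine lintegral_mono_ae (hwK.mono fun x hx => lintegral_mono_ae (hwK.mono fun y hy => ?_))
  have hxy : frobNorm (F (w x) - F (w y)) ≤ frobNorm (w x - w y) := by
    simpa only [frobNorm_eq_norm, dist_eq_norm, NNReal.coe_one, one_mul] using
      hF.dist_le_mul _ hx _ hy
  gcongr
  exact Real.sqrt_nonneg _

theorem lpPow_le_of_ae_le {v w : EuclideanSpace ℝ (Fin n) → Matrix (Fin m) (Fin m) ℝ} {a b : ℝ}
    (h : ∀ᵐ x ∂volume.restrict Ω, frobNorm (v x) ^ p ≤ a + b * frobNorm (w x) ^ p) :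
    lpPow Ω p v ≤ ENNReal.ofReal a * volume Ω + ENNReal.ofReal b * lpPow Ω p w := by
  calc lpPow Ω p v
      ≤ ∫⁻ x in Ω, ENNReal.ofReal a + ENNReal.ofReal b * ENNReal.ofReal (frobNorm (w x) ^ p) := by
        refine lintegral_mono_ae (h.mono fun x hx => ?_)
        have hw_nonneg : 0 ≤ frobNorm (w x) ^ p := by rw [frobNorm_eq_norm]; positivity
        rw [← ENNReal.ofReal_mul' hw_nonneg]
        exact (ENNReal.ofReal_le_ofReal hx).trans ENNReal.ofReal_add_le
    _ = ENNReal.ofReal a * volume Ω + ENNReal.ofReal b * lpPow Ω p w := by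
        rw [lintegral_add_left measurable_const, lintegral_const_mul' _ _ ENNReal.ofReal_ne_top,
          setLIntegral_const, lpPow]

end FractionalSobolev

theorem clipProj_comp_mem_Wsp_general {n m : ℕ} (Ω : Set (EuclideanSpace ℝ (Fin n)))
    (hΩb : Bornology.IsBounded Ω)
    (p s ε : ℝ) (hp : 1 < p) (hε : 0 < ε)
    (w : EuclideanSpace ℝ (Fin n) → Matrix (Fin m) (Fin m) ℝ)
    (hw : MemWsp Ω p s {M | Mᵀ = M} w) :
    MemWsp Ω p s {M | M.PosDef ∧ ∀ μ ∈ spectrum ℝ M, ε ≤ μ}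
        (fun x => clipProj ε (w x)) ∧
      gagliardoPow Ω p s (fun x => clipProj ε (w x)) ≤ gagliardoPow Ω p s w ∧
      lpPow Ω p (fun x => clipProj ε (w x)) ≤
        ENNReal.ofReal (2 ^ (p - 1) * ((m : ℝ) * ε ^ 2) ^ (p / 2)) * volume Ω +
          ENNReal.ofReal (2 ^ (p - 1)) * lpPow Ω p w := by
  obtain ⟨⟨hw_meas, hw_symm, hw_lp⟩, hw_gag⟩ := hw
  have hw_herm : ∀ᵐ x ∂volume.restrict Ω, w x ∈ {A : Matrix (Fin m) (Fin m) ℝ | A.IsHermitian} :=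
    hw_symm.mono fun x hx => isHermitian_iff_isSymm.mpr hx
  have hgag := gagliardoPow_comp_le (s := s) (lipschitzOnWith_clipProj (ε := ε))
    (zero_lt_one.trans hp).le hw_herm
  have hlp : lpPow Ω p (fun x => clipProj ε (w x)) ≤
      ENNReal.ofReal (2 ^ (p - 1) * ((m : ℝ) * ε ^ 2) ^ (p / 2)) * volume Ω +
        ENNReal.ofReal (2 ^ (p - 1)) * lpPow Ω p w :=
    lpPow_le_of_ae_le (hw_herm.mono fun x hx => by
      simpa only [frobNorm_eq_norm] using rpow_norm_clipProj_le hx hε.le hp.le)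
  have hherm_closed : IsClosed {A : Matrix (Fin m) (Fin m) ℝ | A.IsHermitian} :=
    isClosed_eq continuous_id.matrix_conjTranspose continuous_id
  refine ⟨⟨⟨?_, ?_, ?_⟩, hgag.trans_lt hw_gag⟩, hgag, hlp⟩
  · exact continuousOn_clipProj.comp_aemeasurable_of_ae_mem
      hherm_closed.measurableSet hw_meas hw_herm
  · exact hw_herm.mono fun x hx =>
      ⟨posDef_clipProj hx hε, fun _ => le_of_mem_spectrum_clipProj hx⟩
  · exact hlp.trans_lt (ENNReal.add_lt_top.mpr ⟨ENNReal.mul_lt_top ENNReal.ofReal_lt_top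
      hΩb.measure_lt_top, ENNReal.mul_lt_top ENNReal.ofReal_lt_top hw_lp⟩)

/-- Composing a function `w ∈ W^{s,p}(Ω; SYM(m))` with the eigenvalue-clipping
projection `P₁` yields `v = P₁ ∘ w ∈ W^{s,p}(Ω; SPD^spec_{[ε,∞)}(m))`; moreover the
Gagliardo seminorm does not increase and
`‖v‖_{L^p}^p ≤ 2^{p−1} (m ε²)^{p/2} |Ω| + 2^{p−1} ‖w‖_{L^p}^p`. -/
theorem clipProj_comp_mem_Wsp {n m : ℕ} (Ω : Set (EuclideanSpace ℝ (Fin n)))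
    (hΩo : IsOpen Ω) (hΩb : Bornology.IsBounded Ω)
    (p s ε : ℝ) (hp : 1 < p) (hs : s ∈ Set.Ioo (0 : ℝ) 1) (hε : 0 < ε)
    (w : EuclideanSpace ℝ (Fin n) → Matrix (Fin m) (Fin m) ℝ)
    (hw : MemWsp Ω p s {M | Mᵀ = M} w) :
    MemWsp Ω p s {M | M.PosDef ∧ ∀ μ ∈ spectrum ℝ M, ε ≤ μ}
        (fun x => clipProj ε (w x)) ∧
      gagliardoPow Ω p s (fun x => clipProj ε (w x)) ≤ gagliardoPow Ω p s w ∧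
      lpPow Ω p (fun x => clipProj ε (w x)) ≤
        ENNReal.ofReal (2 ^ (p - 1) * ((m : ℝ) * ε ^ 2) ^ (p / 2)) * volume Ω +
          ENNReal.ofReal (2 ^ (p - 1)) * lpPow Ω p w :=
  clipProj_comp_mem_Wsp_general Ω hΩb p s ε hp hε w hw
end
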